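/- arXiv:1809.07236 — 5 statements merged into one kernel-verified Lean document; each statement's English description precedes it below -/
import Mathlib

section
/- Let V_s, V, Z, S ∈ ℂ with Z ≠ 0, and write S = P + iQ and Z = R + iX with P, Q, R, X real. If conj(S) = conj(V)·(V_s − V)/Z, then |V|⁴ + (2(PR + QX) − |V_s|²)·|V|² + |S|²·|Z|² = 0. -/
/-!
Clearing the denominator turns the power-flow relation into
`conj V * V_s = conj S * Z + |V|²`. Taking squared norms of both sides, the right-hand side
expands to `|S|²|Z|² + 2 |V|² Re (conj S * Z) + |V|⁴`, and `Re (conj S * Z) = PR + QX`.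
-/

open ComplexConjugate

lemma Complex.norm_add_ofReal_sq (w : ℂ) (r : ℝ) :
    ‖w + r‖ ^ 2 = ‖w‖ ^ 2 + 2 * r * w.re + r ^ 2 := by
  simp only [Complex.sq_norm, Complex.normSq_apply, Complex.add_re, Complex.add_im,
    Complex.ofReal_re, Complex.ofReal_im]
  ring

lemma conj_mul_eq_conj_mul_add_sq_norm_of_conj_eq_div {V_s V Z S : ℂ} (hZ : Z ≠ 0)
    (h : conj S = conj V * (V_s - V) / Z) :
    conj V * V_s = conj S * Z + (‖V‖ ^ 2 : ℝ) := by
  rw [h, div_mul_cancel₀ _ hZ, Complex.ofReal_pow, ← Complex.mul_conj', mul_comm V]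
  ring

theorem two_bus_quadratic
    (V_s V Z S : ℂ) (hZ : Z ≠ 0)
    (P Q R X : ℝ) (hS : S = P + Q * Complex.I) (hZRX : Z = R + X * Complex.I)
    (h : (starRingEnd ℂ) S = (starRingEnd ℂ) V * (V_s - V) / Z) :
    ‖V‖ ^ 4 + (2 * (P * R + Q * X) - ‖V_s‖ ^ 2) * ‖V‖ ^ 2
      + ‖S‖ ^ 2 * ‖Z‖ ^ 2 = 0 := by
  have hnorm :=
    congrArg (‖·‖ ^ 2) (conj_mul_eq_conj_mul_add_sq_norm_of_conj_eq_div hZ h)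
  simp only [Complex.norm_add_ofReal_sq, norm_mul, Complex.norm_conj, mul_pow] at hnorm
  have hre : (conj S * Z).re = P * R + Q * X := by
    simp [hS, hZRX]
  rw [hre] at hnorm
  linear_combination -hnorm
end

section
/- Let a, m, k be real numbers with a ≥ 0, m ≥ 0, and |k| ≤ m. Then there exists a real number t ≥ 0 satisfying t² + (2k − a)t + m² = 0 if and only if a ≥ 2(k + m). -/
theorem quadratic_nonneg_root_iff
    (a m k : ℝ) (ha : 0 ≤ a) (hm : 0 ≤ m) (hk : |k| ≤ m) :
    (∃ t : ℝ, 0 ≤ t ∧ t ^ 2 + (2 * k - a) * t + m ^ 2 = 0) ↔ a ≥ 2 * (k + m) := by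
  constructor
  · rintro ⟨t, ht, heq⟩
    rcases eq_or_lt_of_le ht with h0 | h0
    · have ht0 : t = 0 := h0.symm
      subst ht0
      have hm0 : m = 0 := by nlinarith [sq_nonneg m]
      have hk0 : k = 0 := by
        have := abs_nonneg k
        have : |k| = 0 := le_antisymm (hm0 ▸ hk) (abs_nonneg k)
        exact abs_eq_zero.mp this
      simp [hm0, hk0]; linarith
    · nlinarith [sq_nonneg (t - m)]
  · intro hge
    have hd : 2 * m ≤ a - 2 * k := by linarith
    have hdisc : 0 ≤ (a - 2 * k) ^ 2 - 4 * m ^ 2 := by nlinarith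
    set s := Real.sqrt ((a - 2 * k) ^ 2 - 4 * m ^ 2) with hs
    have hs2 : s ^ 2 = (a - 2 * k) ^ 2 - 4 * m ^ 2 := Real.sq_sqrt hdisc
    have hsnn : 0 ≤ s := Real.sqrt_nonneg _
    refine ⟨((a - 2 * k) + s) / 2, by linarith, by nlinarith⟩
end

section
/- Let E, Z, S ∈ ℂ with Z ≠ 0. There exists V ∈ ℂ such that conj(S)·Z = conj(V)·(E − V) if and only if |E|² ≥ 2(Re(S·conj(Z)) + |S|·|Z|). -/
/-!
Necessity is AM–GM: splitting `E = V + (E - V)` gives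
`‖E‖² - 2 Re(conj V (E - V)) = ‖V‖² + ‖E - V‖² ≥ 2 ‖V‖ ‖E - V‖ = 2 ‖conj V (E - V)‖`.
Sufficiency: the value `s = ‖V‖²` of a solution is real, so `conj V * E = W + s` pins down
`V = conj (W + s) / conj E` when `E ≠ 0`, and `‖V‖² = s` becomes the real quadratic
`normSq (W + s) = s ‖E‖²`, whose discriminant `(‖E‖² - 2 Re W)² - 4 ‖W‖²` is nonnegative
exactly under the stated bound.
-/

open ComplexConjugate

namespace Complex

theorem two_mul_re_add_norm_conj_mul_le_sq_norm_add (a b : ℂ) :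
    2 * ((conj a * b).re + ‖conj a * b‖) ≤ ‖a + b‖ ^ 2 := by
  have hre : (conj a * b).re = (a * conj b).re := by
    rw [← conj_re, map_mul, conj_conj, mul_comm]
  rw [Complex.sq_norm, normSq_add, ← Complex.sq_norm, ← Complex.sq_norm, norm_mul, norm_conj, hre]
  nlinarith [sq_nonneg (‖a‖ - ‖b‖)]

theorem exists_nonneg_normSq_add_ofReal_eq_mul (W : ℂ) (t : ℝ)
    (h : 2 * (W.re + ‖W‖) ≤ t) : ∃ s : ℝ, 0 ≤ s ∧ normSq (W + s) = s * t := by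
  have hp : 2 * ‖W‖ ≤ t - 2 * W.re := by linarith
  have hW : ‖W‖ ^ 2 = W.re ^ 2 + W.im ^ 2 := by
    rw [Complex.sq_norm, normSq_apply]; ring
  have hD : 0 ≤ (t - 2 * W.re) ^ 2 - 4 * ‖W‖ ^ 2 := by nlinarith [norm_nonneg W]
  refine ⟨(t - 2 * W.re + √((t - 2 * W.re) ^ 2 - 4 * ‖W‖ ^ 2)) / 2, ?_, ?_⟩
  · linarith [norm_nonneg W, Real.sqrt_nonneg ((t - 2 * W.re) ^ 2 - 4 * ‖W‖ ^ 2)]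
  rw [normSq_apply, add_re, add_im, ofReal_re, ofReal_im, add_zero]
  linear_combination (1 / 4 : ℝ) * Real.sq_sqrt hD - hW

theorem exists_conj_mul_sub_eq_iff (E W : ℂ) :
    (∃ V : ℂ, conj V * (E - V) = W) ↔ 2 * (W.re + ‖W‖) ≤ ‖E‖ ^ 2 := by
  constructor
  · rintro ⟨V, rfl⟩
    simpa using two_mul_re_add_norm_conj_mul_le_sq_norm_add V (E - V)
  · intro h
    obtain ⟨s, hs, hWs⟩ := exists_nonneg_normSq_add_ofReal_eq_mul W (‖E‖ ^ 2) h
    rcases eq_or_ne E 0 with rfl | hE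
    · have hW : W = -s := eq_neg_of_add_eq_zero_left (by simpa using hWs)
      refine ⟨√s, ?_⟩
      rw [conj_ofReal, zero_sub, mul_neg, ← ofReal_mul, Real.mul_self_sqrt hs, hW]
    · refine ⟨conj (W + s) / conj E, ?_⟩
      have hnormSq : conj (conj (W + s) / conj E) * (conj (W + s) / conj E) = s := by
        rw [mul_comm, mul_conj, normSq_div, normSq_conj, normSq_conj, hWs, ← Complex.sq_norm,
          mul_div_assoc, div_self (by positivity), mul_one]
      rw [mul_sub, hnormSq, map_div₀, conj_conj, conj_conj, div_mul_cancel₀ _ hE]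
      ring

end Complex

theorem two_bus_solvability_general
    (E Z S : ℂ) :
    (∃ V : ℂ, (starRingEnd ℂ) S * Z = (starRingEnd ℂ) V * (E - V)) ↔
      ‖E‖ ^ 2 ≥ 2 * ((S * (starRingEnd ℂ) Z).re + ‖S‖ * ‖Z‖) := by
  have hre : (S * conj Z).re = (conj S * Z).re := by
    rw [← Complex.conj_re, map_mul, Complex.conj_conj]
  have hnorm : ‖S‖ * ‖Z‖ = ‖conj S * Z‖ := by
    rw [norm_mul, Complex.norm_conj]
  simp only [eq_comm (a := conj S * Z)]
  rw [hre, hnorm, ge_iff_le, Complex.exists_conj_mul_sub_eq_iff]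

theorem two_bus_solvability
    (E Z S : ℂ) (hZ : Z ≠ 0) :
    (∃ V : ℂ, (starRingEnd ℂ) S * Z = (starRingEnd ℂ) V * (E - V)) ↔
      ‖E‖ ^ 2 ≥ 2 * ((S * (starRingEnd ℂ) Z).re + ‖S‖ * ‖Z‖) :=
  two_bus_solvability_general E Z S
end

section
/- Let b > 0 and Q > 0 be real numbers. There exists V ∈ ℂ satisfying i·Q = V · conj((−i·b)·(1 − V)) if and only if Q ≤ b/4. -/
theorem lossless_two_bus_solvability
    (b Q : ℝ) (hb : 0 < b) (hQ : 0 < Q) :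
    (∃ V : ℂ, Complex.I * Q = V * (starRingEnd ℂ) ((-Complex.I * b) * (1 - V))) ↔
      Q ≤ b / 4 := by
  constructor
  · rintro ⟨V, hV⟩
    have hre := congrArg Complex.re hV
    have him := congrArg Complex.im hV
    set x := V.re with hx
    set y := V.im with hy
    simp [Complex.mul_re, Complex.mul_im, Complex.sub_re, Complex.sub_im,
      Complex.conj_re, Complex.conj_im, Complex.ofReal_re, Complex.ofReal_im] at hre him
    nlinarith [sq_nonneg (2*x - 1), sq_nonneg y, hb.le, hre, him]
  · intro h
    have hnn : (0:ℝ) ≤ 1/4 - Q/b := by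
      have : Q / b ≤ 1/4 := by
        rw [div_le_div_iff₀ hb (by norm_num)]; linarith
      linarith
    set s := Real.sqrt (1/4 - Q/b) with hs
    have hs2 : s^2 = 1/4 - Q/b := Real.sq_sqrt hnn
    set x : ℝ := 1/2 + s with hxdef
    have hxeq : b * (x * (1 - x)) = Q := by
      have : x * (1 - x) = Q / b := by
        rw [hxdef]; nlinarith [hs2]
      rw [this]; field_simp
    refine ⟨(x:ℂ), ?_⟩
    have hconj : (starRingEnd ℂ) ((-Complex.I * b) * (1 - (x:ℂ))) =
        Complex.I * b * (1 - (x:ℂ)) := by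
      simp [map_mul, map_sub, Complex.conj_I]
    rw [hconj]
    have : ((x:ℂ) * (Complex.I * b * (1 - x))) = Complex.I * ((b * (x * (1-x)) : ℝ) : ℂ) := by
      push_cast; ring
    rw [this, hxeq]
end

section
/- Consider Q = 3/4 and the unique V ∈ ℂ satisfying i·Q = V · conj((−3i)·(1 − V)); then V = 1/2 and the load impedance magnitude satisfies |V|²/Q = 1/3 = |1/(−3i)|, whereas |1/i + 1/(−3i)| = 2/3 ≠ 1/3. -/
/-!
Through a line of admittance `-B i` the load draws `V * conj (-B i (1 - V)) = i B (V - |V|²)`, so the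
load-flow equation `i Q = …` says `V - |V|² = Q / B`. This forces `V` to be real with `V - V² = Q / B`,
which at the nose point `Q = B / 4` has the double root `V = 1/2`. There the load impedance is
`|V|² / Q = 1 / B`, the line impedance, rather than `|1/Y_sh + 1/Y₁₂| = 2/3`.
-/

open Complex ComplexConjugate

lemma mul_conj_susceptance_mul_sub (B : ℝ) (V : ℂ) :
    V * conj ((-B * I) * (1 - V)) = I * B * (V - normSq V) := by
  rw [← mul_conj V]
  simp only [map_mul, map_neg, map_sub, map_one, conj_ofReal, conj_I]
  ring

lemma sub_normSq_eq_quarter_iff (V : ℂ) : V - normSq V = 1 / 4 ↔ V = 1 / 2 := by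
  constructor
  · intro h
    have hre := congrArg re h
    have him := congrArg im h
    simp only [sub_re, sub_im, ofReal_re, ofReal_im, normSq_apply] at hre him
    norm_num at hre him
    apply Complex.ext <;> norm_num
    · nlinarith [sq_nonneg (V.re - 1 / 2), sq_nonneg V.im]
    · nlinarith [sq_nonneg (V.re - 1 / 2), sq_nonneg V.im]
  · rintro rfl
    norm_num [normSq_apply]

lemma reactive_load_flow_iff_of_four_mul_eq (B Q : ℝ) (hQ : Q ≠ 0) (hB : 4 * Q = B) (V : ℂ) :
    I * Q = V * conj ((-B * I) * (1 - V)) ↔ V = 1 / 2 := by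
  rw [mul_conj_susceptance_mul_sub, ← sub_normSq_eq_quarter_iff, ← hB]
  have hIQ : I * Q ≠ 0 := mul_ne_zero I_ne_zero (ofReal_ne_zero.mpr hQ)
  constructor
  · intro h
    apply mul_left_cancel₀ hIQ
    push_cast at h ⊢
    linear_combination (-1 / 4 : ℂ) * h
  · intro h
    rw [h]
    push_cast
    ring

theorem counterexample_two_bus :
    (∃! V : ℂ, Complex.I * (3 / 4 : ℝ) =
        V * (starRingEnd ℂ) ((-3 * Complex.I) * (1 - V))) ∧
    (∀ V : ℂ, Complex.I * (3 / 4 : ℝ) =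
        V * (starRingEnd ℂ) ((-3 * Complex.I) * (1 - V)) →
      V = 1 / 2 ∧
      ‖V‖ ^ 2 / (3 / 4 : ℝ) = 1 / 3 ∧
      (1 / 3 : ℝ) = ‖(1 / (-3 * Complex.I) : ℂ)‖ ∧
      ‖(1 / Complex.I + 1 / (-3 * Complex.I) : ℂ)‖ = 2 / 3 ∧
      (2 / 3 : ℝ) ≠ 1 / 3) := by
  have hflow (V : ℂ) :=
    reactive_load_flow_iff_of_four_mul_eq 3 (3 / 4) (by norm_num) (by norm_num) V
  simp only [ofReal_ofNat] at hflow
  refine ⟨by simpa only [hflow] using existsUnique_eq, fun V hV => ?_⟩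
  obtain rfl := (hflow V).mp hV
  have hshunt : (1 / I + 1 / (-3 * I) : ℂ) = ((-2 / 3 : ℝ) : ℂ) * I := by
    simp only [one_div, mul_inv, inv_I]
    push_cast
    ring
  refine ⟨rfl, by norm_num, by norm_num, ?_, by norm_num⟩
  rw [hshunt, norm_mul, norm_real, norm_I]
  norm_num
end
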